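/- arXiv:1901.07830 — 3 statements merged into one kernel-verified Lean document; each statement's English description precedes it below -/
import Mathlib

section
/- For all integers n ≥ 2 and 1 ≤ r ≤ n, the number of ordered D_n-partitions whose blocks, listed in order, have the form [C_1, −C_1, C_2, −C_2, …, C_r, −C_r] (so there is no zero-block and there are r pairs of nonzero blocks), whose first block C_1 is a singleton, and such that the total number of negative elements in C_1 ∪ C_2 ∪ ⋯ ∪ C_r is odd, equals n · 2^{n−1} · (r−1)! · S(n−1, r−1). -/
open Classical Finset

/-! ### Signed permutations (type B), window notation -/

/-- `w` is the window notation of a signed permutation of `{1,…,n}`. -/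
def IsSignedPerm {n : ℕ} (w : Fin n → ℤ) : Prop :=
  (∀ i, 1 ≤ |w i| ∧ |w i| ≤ (n : ℤ)) ∧ Function.Injective fun i => |w i|

/-- The value `β(i)` for `1 ≤ i ≤ n`, and `0` otherwise (so `β(0) = 0`). -/
def bVal {n : ℕ} (w : Fin n → ℤ) (i : ℕ) : ℤ :=
  if h : 1 ≤ i ∧ i ≤ n then w ⟨i - 1, by omega⟩ else 0

/-- Type `B` descent number: `#{i ∈ {0,…,n−1} : β(i) > β(i+1)}`, with `β(0) = 0`. -/
noncomputable def desB {n : ℕ} (w : Fin n → ℤ) : ℕ :=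
  ((Finset.range n).filter fun i => bVal w (i + 1) < bVal w i).card

/-- Type `B` Eulerian number `A_B(n,k)`. -/
noncomputable def EulB (n k : ℕ) : ℕ :=
  Nat.card { w : Fin n → ℤ // IsSignedPerm w ∧ desB w = k }

/-- Type `D` descent number: as in type `B` but with the convention `γ(0) = −γ(2)`. -/
noncomputable def desD {n : ℕ} (w : Fin n → ℤ) : ℕ :=
  ((Finset.range n).filter fun i =>
    bVal w (i + 1) < (if i = 0 then -(bVal w 2) else bVal w i)).card

/-- `w` has an even number of negative entries. -/
def IsEvenSigned {n : ℕ} (w : Fin n → ℤ) : Prop :=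
  Even ((Finset.univ.filter fun i => w i < 0)).card

/-- Type `D` Eulerian number `A_D(n,k)`. -/
noncomputable def EulD (n k : ℕ) : ℕ :=
  Nat.card { w : Fin n → ℤ // IsSignedPerm w ∧ IsEvenSigned w ∧ desD w = k }

/-! ### Set partitions of types B and D -/

/-- The negative `−C` of a block `C`. -/
def negSet (C : Finset ℤ) : Finset ℤ := C.image fun x => -x

/-- A `Bₙ`-partition: a set partition of `{−n,…,−1,1,…,n}` such that at most one block
satisfies `C = −C` (the zero-block), and `−C` is a block whenever `C` is. -/
structure BPartition (n : ℕ) where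
  blocks : Finset (Finset ℤ)
  cover : ∀ x : ℤ, (x ≠ 0 ∧ |x| ≤ (n : ℤ)) ↔ ∃ C ∈ blocks, x ∈ C
  nonempty : ∀ C ∈ blocks, C.Nonempty
  disj : ∀ C ∈ blocks, ∀ C' ∈ blocks, C ≠ C' → Disjoint C C'
  closed : ∀ C ∈ blocks, negSet C ∈ blocks
  zeroUnique : ∀ C ∈ blocks, ∀ C' ∈ blocks, negSet C = C → negSet C' = C' → C = C'

/-- A `Dₙ`-partition: a `Bₙ`-partition whose zero-block, if present, has at least
two positive elements. -/
def IsDPartition {n : ℕ} (P : BPartition n) : Prop :=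
  ∀ C ∈ P.blocks, negSet C = C → 2 ≤ (C.filter fun x => 0 < x).card

/-- `P` has exactly `r` pairs `{C, −C}` of nonzero blocks. -/
def hasPairs {n : ℕ} (P : BPartition n) (r : ℕ) : Prop :=
  (P.blocks.filter fun C => negSet C ≠ C).card = 2 * r

/-- Stirling number of the second kind of type `B`. -/
noncomputable def SB (n r : ℕ) : ℕ :=
  Nat.card { P : BPartition n // hasPairs P r }

/-- Stirling number of the second kind of type `D`. -/
noncomputable def SD (n r : ℕ) : ℕ :=
  Nat.card { P : BPartition n // IsDPartition P ∧ hasPairs P r }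

/-- An ordered `Bₙ`-partition: a `Bₙ`-partition with a linear order on its blocks in
which the zero-block (if present) comes first and `C, −C` are always adjacent. -/
structure OrderedBPartition (n : ℕ) where
  P : BPartition n
  order : List (Finset ℤ)
  nodup : order.Nodup
  same : order.toFinset = P.blocks
  zeroFirst : ∀ C ∈ P.blocks, negSet C = C → order[0]? = some C
  adjacent : ∀ C ∈ P.blocks, negSet C ≠ C →
    ∃ i : ℕ, (order[i]? = some C ∧ order[i+1]? = some (negSet C)) ∨
             (order[i]? = some (negSet C) ∧ order[i+1]? = some C)

/-! ### Classical Stirling and Eulerian numbers -/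

/-- The classical Stirling number of the second kind `S(n,r)`. -/
noncomputable def Stir (n r : ℕ) : ℕ :=
  Nat.card { P : Finpartition (Finset.univ : Finset (Fin n)) // P.parts.card = r }

/-- Number of descents of a permutation of `{1,…,n}`. -/
noncomputable def desA {n : ℕ} (σ : Equiv.Perm (Fin n)) : ℕ :=
  ((Finset.range (n - 1)).filter fun i =>
    ∃ h : i + 1 < n, σ ⟨i + 1, h⟩ < σ ⟨i, Nat.lt_of_succ_lt h⟩).card

/-- The classical Eulerian number `A(n,k)`: permutations with `k−1` descents
(and `A(n,0) = 0`). -/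
noncomputable def EulA (n k : ℕ) : ℕ :=
  if k = 0 then 0 else Nat.card { σ : Equiv.Perm (Fin n) // desA σ = k - 1 }

/-! ### Colored permutations -/

/-- `π` is (the window notation of) a colored permutation in `G_{m,n}`. -/
def IsColoredPerm {m n : ℕ} (π : Fin n → Fin n × ZMod m) : Prop :=
  Function.Bijective fun i => (π i).1

/-- The color order `a ≺ b` on the colored alphabet. -/
def colorLt {m n : ℕ} (a b : Fin n × ZMod m) : Prop :=
  b.2.val < a.2.val ∨ (a.2 = b.2 ∧ a.1 < b.1)

/-- The descent number `des_G` of a colored permutation. -/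
noncomputable def desG {m n : ℕ} (π : Fin n → Fin n × ZMod m) : ℕ :=
  ((Finset.range (n - 1)).filter fun i =>
    ∃ h : i + 1 < n, colorLt (π ⟨i + 1, h⟩) (π ⟨i, Nat.lt_of_succ_lt h⟩)).card
  + (if h : 0 < n then (if (π ⟨0, h⟩).2 ≠ 0 then 1 else 0) else 0)

/-- The Eulerian number `A_m(n,k)` of `G_{m,n}`. -/
noncomputable def EulG (m n k : ℕ) : ℕ :=
  Nat.card { π : Fin n → Fin n × ZMod m // IsColoredPerm π ∧ desG π = k }

/-- The shift `C^{[t]}` of a block of the colored alphabet. -/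
def shiftBlock {m n : ℕ} (t : ZMod m) (C : Finset (Fin n × ZMod m)) :
    Finset (Fin n × ZMod m) :=
  C.image fun p => (p.1, p.2 + t)

/-- A `G_{m,n}`-partition. -/
structure GPartition (m n : ℕ) where
  blocks : Finset (Finset (Fin n × ZMod m))
  cover : ∀ x : Fin n × ZMod m, ∃ C ∈ blocks, x ∈ C
  nonempty : ∀ C ∈ blocks, C.Nonempty
  disj : ∀ C ∈ blocks, ∀ C' ∈ blocks, C ≠ C' → Disjoint C C'
  closed : ∀ C ∈ blocks, shiftBlock 1 C ∈ blocks
  zeroUnique : ∀ C ∈ blocks, ∀ C' ∈ blocks,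
    shiftBlock 1 C = C → shiftBlock 1 C' = C' → C = C'

/-- The number of equivalence classes (orbits under shifting) of nonzero blocks. -/
noncomputable def numClasses {m n : ℕ} (P : GPartition m n) : ℕ :=
  ((P.blocks.filter fun C => shiftBlock 1 C ≠ C).image
    fun C => (Finset.range m).image fun t => shiftBlock (t : ZMod m) C).card

/-- Stirling number of the second kind `S_m(n,r)` for `G_{m,n}`. -/
noncomputable def SG (m n r : ℕ) : ℕ :=
  Nat.card { P : GPartition m n // numClasses P = r }

/-- An ordered `G_{m,n}`-partition. -/
structure OrderedGPartition (m n : ℕ) where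
  P : GPartition m n
  order : List (Finset (Fin n × ZMod m))
  nodup : order.Nodup
  same : order.toFinset = P.blocks
  zeroFirst : ∀ C ∈ P.blocks, shiftBlock 1 C = C → order[0]? = some C
  consec : ∀ C ∈ P.blocks, shiftBlock 1 C ≠ C →
    ∃ i : ℕ, ∃ s : ZMod m, ∀ t : ℕ, t < m →
      order[i + t]? = some (shiftBlock (s + (t : ZMod m)) C)

/-!
Such an ordered partition is determined by its blocks `C₁, …, C_r`. Writing the elements of `C_j`
as `±(i+1)`, the absolute values form an ordered set partition `B₁, …, B_r` of `{1, …, n}` and the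
signs a function `s : {1, …, n} → {±}`; conversely every such pair `(s, B)` yields an ordered
`Dₙ`-partition `[C₁, −C₁, …, C_r, −C_r]` without zero-block. The negative elements of
`C₁ ∪ ⋯ ∪ C_r` correspond to the minus signs of `s`, and `C₁` is a singleton iff `B₁` is. So we
count sign functions with an odd number of minus signs (`2^{n−1}`: changing one fixed sign swaps odd
and even) times ordered partitions with a singleton first block (`n` choices of the singleton, then
`(r−1)! · S(n−1, r−1)` ordered partitions of the rest).
-/

open scoped Nat

def IsOrderedPartition {ι α : Type*} (B : ι → Finset α) : Prop :=
  (∀ j, (B j).Nonempty) ∧ ∀ x, ∃! j, x ∈ B j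

namespace IsOrderedPartition

variable {ι α : Type*} {B : ι → Finset α}

lemma eq_of_mem (hB : IsOrderedPartition B) {x : α} {j j' : ι} (hj : x ∈ B j)
    (hj' : x ∈ B j') : j = j' :=
  (hB.2 x).unique hj hj'

lemma injective (hB : IsOrderedPartition B) : Function.Injective B := fun j j' h => by
  obtain ⟨x, hx⟩ := hB.1 j
  exact hB.eq_of_mem hx (h ▸ hx)

lemma map_equiv_iff {β : Type*} (e : α ≃ β) :
    IsOrderedPartition (fun j => (B j).map e.toEmbedding) ↔ IsOrderedPartition B := by
  simp only [IsOrderedPartition, map_nonempty, mem_map_equiv]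
  exact and_congr_right fun _ => (e.forall_congr_left (p := fun x => ∃! j, x ∈ B j)).symm

lemma sum_card_filter [Fintype ι] [Fintype α] (hB : IsOrderedPartition B) (p : α → Prop)
    [DecidablePred p] : ∑ j, #((B j).filter p) = #(univ.filter p) := by
  rw [← card_biUnion]
  · congr 1
    ext x
    simp only [mem_biUnion, mem_univ, true_and, mem_filter]
    refine ⟨fun ⟨_, _, hp⟩ => hp, fun hp => ?_⟩
    obtain ⟨j, hj, -⟩ := hB.2 x
    exact ⟨j, hj, hp⟩
  · intro j _ j' _ hjj'
    simp only [Function.onFun, disjoint_left, mem_filter]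
    exact fun x hx hx' => hjj' (hB.eq_of_mem hx.1 hx'.1)

end IsOrderedPartition

def orderedPartitionCongr {ι α β : Type*} (e : α ≃ β) :
    {B : ι → Finset α // IsOrderedPartition B} ≃ {B : ι → Finset β // IsOrderedPartition B} :=
  (Equiv.arrowCongr (Equiv.refl ι) (Equiv.finsetCongr e)).subtypeEquiv fun _ =>
    (IsOrderedPartition.map_equiv_iff e).symm

section Counting

variable {α : Type*} [Fintype α] [DecidableEq α]

lemma isOrderedPartition_finpartition_parts {ι : Type*} (P : Finpartition (univ : Finset α))
    (e : ι ≃ P.parts) : IsOrderedPartition fun j => (e j : Finset α) := by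
  refine ⟨fun j => P.nonempty_of_mem_parts (e j).2, fun x => ?_⟩
  obtain ⟨t, ⟨ht, hxt⟩, hunique⟩ := P.existsUnique_mem (mem_univ x)
  refine ⟨e.symm ⟨t, ht⟩, by simpa using hxt, fun j hj => ?_⟩
  rw [Equiv.eq_symm_apply]
  exact Subtype.ext (hunique _ ⟨(e j).2, hj⟩)

lemma card_orderedPartition (k : ℕ) :
    Nat.card {B : Fin k → Finset α // IsOrderedPartition B} =
      k ! * Nat.card {P : Finpartition (univ : Finset α) // #P.parts = k} := by
  let F : (Σ P : {P : Finpartition (univ : Finset α) // #P.parts = k}, Fin k ≃ P.1.parts) →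
      {B : Fin k → Finset α // IsOrderedPartition B} :=
    fun x => ⟨fun j => x.2 j, isOrderedPartition_finpartition_parts x.1.1 x.2⟩
  have hparts (x) : x.1.1.parts = univ.image (F x).1 := by
    ext t
    refine ⟨fun ht => mem_image.2 ⟨x.2.symm ⟨t, ht⟩, mem_univ _, by simp [F]⟩, fun ht => ?_⟩
    obtain ⟨j, -, rfl⟩ := mem_image.1 ht
    exact (x.2 j).2
  have hF : Function.Bijective F := by
    refine ⟨fun ⟨⟨P, hP⟩, e⟩ ⟨⟨P', hP'⟩, e'⟩ h => ?_, fun ⟨B, hB⟩ => ?_⟩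
    · have hPP' : P = P' := Finpartition.ext <| by
        rw [hparts ⟨⟨P, hP⟩, e⟩, hparts ⟨⟨P', hP'⟩, e'⟩, h]
      subst hPP'
      obtain rfl : e = e' := Equiv.ext fun j => Subtype.ext (congrFun (congrArg Subtype.val h) j)
      rfl
    · let P : Finpartition (univ : Finset α) :=
        .ofExistsUnique (univ.image B) (fun _ _ => subset_univ _)
          (fun x _ => by
            obtain ⟨j, hj, hunique⟩ := hB.2 x
            exact ⟨B j, ⟨mem_image_of_mem B (mem_univ j), hj⟩,
              fun t ⟨ht, hx⟩ => by obtain ⟨j', -, rfl⟩ := mem_image.1 ht; rw [hunique j' hx]⟩)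
          (fun h => by obtain ⟨j, -, hj⟩ := mem_image.1 h; exact (hB.1 j).ne_empty hj)
      have hP : #P.parts = k := by
        simp [P, card_image_of_injective _ hB.injective]
      let e : Fin k ≃ P.parts := Equiv.ofBijective (fun j => ⟨B j, by simp [P]⟩)
        ⟨fun j j' h => hB.injective (congrArg Subtype.val h), fun ⟨t, ht⟩ => by
          obtain ⟨j, -, rfl⟩ := mem_image.1 ht
          exact ⟨j, rfl⟩⟩
      exact ⟨⟨⟨P, hP⟩, e⟩, rfl⟩
  have hcard (P : {P : Finpartition (univ : Finset α) // #P.parts = k}) :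
      Nat.card (Fin k ≃ P.1.parts) = k ! := by
    have hP : Fintype.card P.1.parts = k := by simpa using P.2
    rw [Nat.card_eq_fintype_card, Fintype.card_equiv (Fintype.equivFinOfCardEq hP).symm,
      Fintype.card_fin]
  rw [← Nat.card_eq_of_bijective F hF, Nat.card_sigma, sum_congr rfl fun P _ => hcard P,
    sum_const, card_univ, smul_eq_mul, Nat.card_eq_fintype_card, mul_comm]

end Counting

section SingletonHead

variable {α : Type*} [DecidableEq α] {k : ℕ}

lemma isOrderedPartition_cons_singleton_iff {a : α} {g : Fin k → Finset {x // x ≠ a}} :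
    IsOrderedPartition
        (Fin.cons {a} fun j => (g j).map (.subtype _) : Fin (k + 1) → Finset α) ↔
      IsOrderedPartition g := by
  constructor
  · rintro ⟨hne, hunique⟩
    refine ⟨fun j => by simpa using hne j.succ, fun y => ?_⟩
    obtain ⟨j, hj, hu⟩ := hunique y
    cases j using Fin.cases with
    | zero => exact absurd (mem_singleton.1 hj) y.2
    | succ j =>
      refine ⟨j, by simpa [y.2] using hj, fun j' hj' => Fin.succ_injective _ (hu j'.succ ?_)⟩
      simpa [y.2] using hj'
  · rintro ⟨hne, hunique⟩
    refine ⟨Fin.cases (by simp) fun j => by simpa using hne j, fun x => ?_⟩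
    by_cases hx : x = a
    · subst hx
      refine ⟨0, by simp, fun j hj => ?_⟩
      cases j using Fin.cases with
      | zero => rfl
      | succ j => simp at hj
    · obtain ⟨j, hj, hu⟩ := hunique ⟨x, hx⟩
      refine ⟨j.succ, by simpa [hx] using hj, fun j' hj' => ?_⟩
      cases j' using Fin.cases with
      | zero => exact absurd (mem_singleton.1 hj') hx
      | succ j' => exact congrArg Fin.succ (hu j' (by simpa [hx] using hj'))

lemma card_orderedPartition_singleton_head [Fintype α] (k : ℕ) :
    Nat.card {B : Fin (k + 1) → Finset α // IsOrderedPartition B ∧ ∃ a, B 0 = {a}} =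
      Fintype.card α * (k ! * Stir (Fintype.card α - 1) k) := by
  let F : (Σ a : α, {g : Fin k → Finset {x // x ≠ a} // IsOrderedPartition g}) →
      {B : Fin (k + 1) → Finset α // IsOrderedPartition B ∧ ∃ a, B 0 = {a}} :=
    fun x => ⟨Fin.cons {x.1} fun j => (x.2.1 j).map (.subtype _),
      isOrderedPartition_cons_singleton_iff.2 x.2.2, x.1, rfl⟩
  have hF : Function.Bijective F := by
    refine ⟨fun ⟨a, g⟩ ⟨a', g'⟩ h => ?_, fun ⟨B, hB, a, ha⟩ => ?_⟩
    · have hB := congrArg Subtype.val h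
      obtain rfl : a = a' := singleton_injective (congrFun hB 0)
      obtain rfl : g = g' := Subtype.ext <| funext fun j => by simpa [F] using congrFun hB j.succ
      rfl
    · have hB' : (Fin.cons {a} fun j => ((B j.succ).subtype (· ≠ a)).map (.subtype _) :
          Fin (k + 1) → Finset α) = B := by
        refine funext (Fin.cases ha.symm fun j => subtype_map_of_mem fun x hx => ?_)
        rintro rfl
        exact Fin.succ_ne_zero j (hB.eq_of_mem hx (ha ▸ mem_singleton_self x))
      have hg : IsOrderedPartition fun j : Fin k => (B j.succ).subtype (· ≠ a) :=
        isOrderedPartition_cons_singleton_iff.1 (by rwa [hB'])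
      exact ⟨⟨a, _, hg⟩, Subtype.ext hB'⟩
  have hcard (a : α) :
      Nat.card {g : Fin k → Finset {x // x ≠ a} // IsOrderedPartition g} =
        k ! * Stir (Fintype.card α - 1) k := by
    have hcompl : Fintype.card {x // x ≠ a} = Fintype.card α - 1 := by
      rw [Fintype.card_subtype_compl, Fintype.card_subtype_eq]
    rw [Nat.card_congr (orderedPartitionCongr (Fintype.equivFinOfCardEq hcompl)),
      card_orderedPartition, Stir]
  rw [← Nat.card_eq_of_bijective F hF, Nat.card_sigma, sum_congr rfl fun a _ => hcard a,
    sum_const, card_univ, smul_eq_mul]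

end SingletonHead

section OddSigns

variable {α : Type*} [Fintype α] [DecidableEq α]

lemma odd_card_update_not_iff (s : α → Bool) (a : α) :
    Odd #{x | Function.update s a (!s a) x = true} ↔ ¬Odd #{x | s x = true} := by
  cases hsa : s a
  · have : filter (fun x => Function.update s a true x = true) univ =
        insert a (filter (fun x => s x = true) univ) := by
      ext x
      by_cases hx : x = a <;> simp [hx]
    rw [Bool.not_false, this, card_insert_of_notMem (by simp [hsa]), Nat.odd_add_one]
  · have : filter (fun x => Function.update s a false x = true) univ =
        (filter (fun x => s x = true) univ).erase a := by
      ext x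
      by_cases hx : x = a <;> simp [hx]
    have ha : a ∈ filter (fun x => s x = true) univ := by simp [hsa]
    rw [Bool.not_true, this, ← card_erase_add_one ha, Nat.odd_add_one, not_not]

lemma card_odd_signs [Nonempty α] :
    Nat.card {s : α → Bool // Odd #{x | s x = true}} = 2 ^ (Fintype.card α - 1) := by
  obtain ⟨a⟩ := ‹Nonempty α›
  let flip : Equiv.Perm (α → Bool) :=
    Function.Involutive.toPerm (fun s => Function.update s a (!s a)) fun s => by simp
  have e : {s : α → Bool // Odd #{x | s x = true}} ≃ {s : α → Bool // ¬Odd #{x | s x = true}} :=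
    flip.subtypeEquiv fun s => ((odd_card_update_not_iff s a).not.trans not_not).symm
  have hsum := Fintype.card_congr (Equiv.sumCompl fun s : α → Bool => Odd #{x | s x = true})
  obtain ⟨m, hm⟩ := Nat.exists_eq_add_one_of_ne_zero (Fintype.card_ne_zero (α := α))
  rw [Fintype.card_sum, ← Fintype.card_congr e, Fintype.card_fun, Fintype.card_bool, hm,
    pow_succ] at hsum
  rw [Nat.card_eq_fintype_card, hm, Nat.add_sub_cancel]
  omega

end OddSigns

lemma mem_negSet {C : Finset ℤ} {x : ℤ} : x ∈ negSet C ↔ -x ∈ C := by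
  simp [negSet, neg_eq_iff_eq_neg]

lemma negSet_negSet (C : Finset ℤ) : negSet (negSet C) = C := by
  ext x
  simp [mem_negSet]

section SignedValues

variable {n : ℕ}

def signedVal (i : Fin n) (b : Bool) : ℤ := if b then -((i : ℤ) + 1) else (i : ℤ) + 1

lemma natAbs_signedVal (i : Fin n) (b : Bool) : (signedVal i b).natAbs = i + 1 := by
  unfold signedVal
  split <;> omega

lemma neg_signedVal (i : Fin n) (b : Bool) : -signedVal i b = signedVal i (!b) := by
  cases b <;> simp [signedVal]

lemma signedVal_neg_iff (i : Fin n) (b : Bool) : signedVal i b < 0 ↔ b = true := by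
  cases b <;> simp [signedVal] <;> omega

lemma signedVal_inj {i i' : Fin n} {b b' : Bool} :
    signedVal i b = signedVal i' b' ↔ i = i' ∧ b = b' := by
  refine ⟨fun h => ?_, fun ⟨hi, hb⟩ => hi ▸ hb ▸ rfl⟩
  have hi : i = i' := Fin.ext <| by
    simpa [natAbs_signedVal] using congrArg Int.natAbs h
  subst hi
  refine ⟨rfl, ?_⟩
  cases b <;> cases b' <;> simp [signedVal] at h ⊢ <;> omega

lemma exists_signedVal_eq_iff {x : ℤ} :
    (∃ i : Fin n, ∃ b, signedVal i b = x) ↔ x ≠ 0 ∧ |x| ≤ n := by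
  constructor
  · rintro ⟨i, b, rfl⟩
    rw [Int.abs_eq_natAbs, natAbs_signedVal]
    have := i.isLt
    cases b <;> simp [signedVal] <;> omega
  · rintro ⟨hx0, hxn⟩
    rw [Int.abs_eq_natAbs] at hxn
    refine ⟨⟨x.natAbs - 1, by omega⟩, decide (x < 0), ?_⟩
    by_cases hx : x < 0 <;> simp [signedVal, hx] <;> omega

end SignedValues

section SignedBlocks

variable {n : ℕ} (s : Fin n → Bool)

def signedBlock (B : Finset (Fin n)) (b : Bool) : Finset ℤ :=
  B.image fun i => signedVal i (s i ^^ b)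

variable {s}

lemma mem_signedBlock {B : Finset (Fin n)} {b : Bool} {x : ℤ} :
    x ∈ signedBlock s B b ↔ ∃ i ∈ B, signedVal i (s i ^^ b) = x :=
  mem_image

lemma negSet_signedBlock (B : Finset (Fin n)) (b : Bool) :
    negSet (signedBlock s B b) = signedBlock s B (!b) := by
  simp only [negSet, signedBlock, image_image]
  congr 1
  funext i
  simp [neg_signedVal]

lemma card_signedBlock (B : Finset (Fin n)) (b : Bool) : #(signedBlock s B b) = #B :=
  card_image_of_injective _ fun _ _ h => (signedVal_inj.1 h).1

lemma card_filter_neg_signedBlock (B : Finset (Fin n)) :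
    #((signedBlock s B false).filter (· < 0)) = #(B.filter (s · = true)) := by
  rw [signedBlock, filter_image, card_image_of_injective _ fun _ _ h => (signedVal_inj.1 h).1]
  simp [signedVal_neg_iff]

variable {r : ℕ} {B : Fin r → Finset (Fin n)}

lemma eq_of_mem_signedBlock (hB : IsOrderedPartition B) {x : ℤ} {j j' : Fin r} {b b' : Bool}
    (hx : x ∈ signedBlock s (B j) b) (hx' : x ∈ signedBlock s (B j') b') : j = j' ∧ b = b' := by
  obtain ⟨i, hi, rfl⟩ := mem_signedBlock.1 hx
  obtain ⟨i', hi', hii'⟩ := mem_signedBlock.1 hx'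
  obtain ⟨rfl, hbb'⟩ := signedVal_inj.1 hii'
  exact ⟨hB.eq_of_mem hi' hi |>.symm, (Bool.bne_right_inj.1 hbb').symm⟩

lemma exists_mem_signedBlock (hB : IsOrderedPartition B) {x : ℤ} (hx : x ≠ 0 ∧ |x| ≤ n) :
    ∃ j b, x ∈ signedBlock s (B j) b := by
  obtain ⟨i, c, rfl⟩ := exists_signedVal_eq_iff.2 hx
  obtain ⟨j, hj, -⟩ := hB.2 i
  exact ⟨j, s i ^^ c, mem_signedBlock.2 ⟨i, hj, by simp⟩⟩

lemma bound_of_mem_signedBlock {B : Finset (Fin n)} {b : Bool} {x : ℤ}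
    (hx : x ∈ signedBlock s B b) : x ≠ 0 ∧ |x| ≤ n := by
  obtain ⟨i, -, rfl⟩ := mem_signedBlock.1 hx
  exact exists_signedVal_eq_iff.1 ⟨i, _, rfl⟩

lemma signedBlock_nonempty (hB : IsOrderedPartition B) (j : Fin r) (b : Bool) :
    (signedBlock s (B j) b).Nonempty :=
  (hB.1 j).image _

lemma sum_card_filter_neg_signedBlock (hB : IsOrderedPartition B) :
    ∑ j, #((signedBlock s (B j) false).filter (· < 0)) = #{i | s i = true} := by
  simp only [card_filter_neg_signedBlock]
  exact hB.sum_card_filter _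

end SignedBlocks

section PairList

def pairList : List (Finset ℤ) → List (Finset ℤ)
  | [] => []
  | C :: l => C :: negSet C :: pairList l

@[simp]
lemma length_pairList (l : List (Finset ℤ)) : (pairList l).length = 2 * l.length := by
  induction l with
  | nil => rfl
  | cons C l ih =>
    rw [pairList, List.length_cons, List.length_cons, ih, List.length_cons]
    ring

lemma mem_pairList {l : List (Finset ℤ)} {X : Finset ℤ} :
    X ∈ pairList l ↔ ∃ C ∈ l, X = C ∨ X = negSet C := by
  induction l with
  | nil => simp [pairList]
  | cons C l ih => simp [pairList, ih, or_assoc]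

lemma getElem?_pairList_two_mul (l : List (Finset ℤ)) (i : ℕ) :
    (pairList l)[2 * i]? = l[i]? := by
  induction l generalizing i with
  | nil => rfl
  | cons C l ih =>
    cases i with
    | zero => rfl
    | succ i => simpa [pairList, Nat.mul_succ] using ih i

lemma getElem?_pairList_two_mul_add_one (l : List (Finset ℤ)) (i : ℕ) :
    (pairList l)[2 * i + 1]? = l[i]?.map negSet := by
  induction l generalizing i with
  | nil => rfl
  | cons C l ih =>
    cases i with
    | zero => rfl
    | succ i => simpa [pairList, Nat.mul_succ] using ih i

lemma nodup_pairList {l : List (Finset ℤ)} (hl : l.Nodup)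
    (hneg : ∀ C ∈ l, ∀ C' ∈ l, C ≠ negSet C') : (pairList l).Nodup := by
  induction l with
  | nil => exact List.nodup_nil
  | cons C l ih =>
    obtain ⟨hCl, hl⟩ := List.nodup_cons.1 hl
    have hneg' : ∀ C ∈ l, ∀ C' ∈ l, C ≠ negSet C' := fun C hC C' hC' =>
      hneg C (List.mem_cons_of_mem _ hC) C' (List.mem_cons_of_mem _ hC')
    rw [pairList, List.nodup_cons, List.nodup_cons, List.mem_cons, mem_pairList, mem_pairList]
    refine ⟨?_, ?_, ih hl hneg'⟩
    · rintro (h | ⟨C', hC', h | h⟩)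
      · exact hneg C List.mem_cons_self C List.mem_cons_self h
      · exact hCl (h ▸ hC')
      · exact hneg C List.mem_cons_self C' (List.mem_cons_of_mem _ hC') h
    · rintro ⟨C', hC', h | h⟩
      · exact hneg C' (List.mem_cons_of_mem _ hC') C List.mem_cons_self h.symm
      · rw [← negSet_negSet C, h, negSet_negSet] at hCl
        exact hCl hC'

lemma eq_pairList_ofFn {L : List (Finset ℤ)} {r : ℕ} (hlen : L.length = 2 * r)
    (hpair : ∀ i < r, L[2 * i + 1]? = some (negSet (L.getD (2 * i) ∅))) :
    L = pairList (List.ofFn fun j : Fin r => L.getD (2 * j) ∅) := by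
  refine List.ext_getElem? fun t => ?_
  obtain ⟨i, rfl | rfl⟩ := Nat.even_or_odd' t
  · rw [getElem?_pairList_two_mul, List.getElem?_ofFn]
    by_cases hi : i < r
    · rw [List.getElem?_eq_getElem (by omega), dif_pos hi, List.getD_eq_getElem _ _ (by omega)]
    · rw [List.getElem?_eq_none (by omega), dif_neg hi]
  · rw [getElem?_pairList_two_mul_add_one, List.getElem?_ofFn]
    by_cases hi : i < r
    · rw [hpair i hi, dif_pos hi]
      rfl
    · rw [List.getElem?_eq_none (by omega), dif_neg hi]
      rfl

end PairList

section SignedPairList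

variable {n r : ℕ} (s : Fin n → Bool) (B : Fin r → Finset (Fin n))

def signedPairList : List (Finset ℤ) :=
  pairList (List.ofFn fun j => signedBlock s (B j) false)

variable {s B}

lemma mem_signedPairList {X : Finset ℤ} :
    X ∈ signedPairList s B ↔ ∃ j b, X = signedBlock s (B j) b := by
  simp only [signedPairList, mem_pairList, List.mem_ofFn]
  constructor
  · rintro ⟨_, ⟨j, rfl⟩, h | h⟩
    · exact ⟨j, false, h⟩
    · exact ⟨j, true, h.trans (negSet_signedBlock _ _)⟩
  · rintro ⟨j, b, rfl⟩
    cases b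
    exacts [⟨_, ⟨j, rfl⟩, .inl rfl⟩, ⟨_, ⟨j, rfl⟩, .inr (negSet_signedBlock _ false).symm⟩]

lemma getElem?_signedPairList_two_mul (j : Fin r) :
    (signedPairList s B)[2 * (j : ℕ)]? = some (signedBlock s (B j) false) := by
  rw [signedPairList, getElem?_pairList_two_mul, List.getElem?_ofFn, dif_pos j.isLt]

lemma getElem?_signedPairList_two_mul_add_one (j : Fin r) :
    (signedPairList s B)[2 * (j : ℕ) + 1]? = some (signedBlock s (B j) true) := by
  rw [signedPairList, getElem?_pairList_two_mul_add_one, List.getElem?_ofFn, dif_pos j.isLt,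
    Option.map_some, negSet_signedBlock]
  rfl

lemma signedBlock_inj (hB : IsOrderedPartition B) {j j' : Fin r} {b b' : Bool} :
    signedBlock s (B j) b = signedBlock s (B j') b' ↔ j = j' ∧ b = b' := by
  refine ⟨fun h => ?_, fun ⟨hj, hb⟩ => hj ▸ hb ▸ rfl⟩
  obtain ⟨x, hx⟩ := signedBlock_nonempty (s := s) hB j b
  exact eq_of_mem_signedBlock hB hx (h ▸ hx)

lemma nodup_signedPairList (hB : IsOrderedPartition B) : (signedPairList s B).Nodup := by
  refine nodup_pairList (List.nodup_ofFn.2 fun j j' h => ((signedBlock_inj hB).1 h).1) ?_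
  simp only [List.mem_ofFn]
  rintro _ ⟨j, rfl⟩ _ ⟨j', rfl⟩ h
  rw [negSet_signedBlock] at h
  simpa using ((signedBlock_inj hB).1 h).2

lemma negSet_ne_self_of_mem_signedPairList (hB : IsOrderedPartition B) {X : Finset ℤ}
    (hX : X ∈ signedPairList s B) : negSet X ≠ X := by
  obtain ⟨j, b, rfl⟩ := mem_signedPairList.1 hX
  rw [negSet_signedBlock, Ne, signedBlock_inj hB]
  simp

variable (s)

def OrderedBPartition.ofSignedPartition (hB : IsOrderedPartition B) : OrderedBPartition n where
  P :=
    { blocks := (signedPairList s B).toFinset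
      cover x := by
        simp only [List.mem_toFinset, mem_signedPairList]
        refine ⟨fun hx => ?_, fun ⟨_, ⟨_, _, rfl⟩, hx⟩ => bound_of_mem_signedBlock hx⟩
        obtain ⟨j, b, hx⟩ := exists_mem_signedBlock (s := s) hB hx
        exact ⟨_, ⟨j, b, rfl⟩, hx⟩
      nonempty C hC := by
        obtain ⟨j, b, rfl⟩ := mem_signedPairList.1 (List.mem_toFinset.1 hC)
        exact signedBlock_nonempty hB j b
      disj C hC C' hC' hne := by
        obtain ⟨j, b, rfl⟩ := mem_signedPairList.1 (List.mem_toFinset.1 hC)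
        obtain ⟨j', b', rfl⟩ := mem_signedPairList.1 (List.mem_toFinset.1 hC')
        refine disjoint_left.2 fun x hx hx' => hne ?_
        obtain ⟨rfl, rfl⟩ := eq_of_mem_signedBlock hB hx hx'
        rfl
      closed C hC := by
        obtain ⟨j, b, rfl⟩ := mem_signedPairList.1 (List.mem_toFinset.1 hC)
        rw [negSet_signedBlock, List.mem_toFinset]
        exact mem_signedPairList.2 ⟨j, _, rfl⟩
      zeroUnique C hC _ _ h :=
        absurd h (negSet_ne_self_of_mem_signedPairList hB (List.mem_toFinset.1 hC)) }
  order := signedPairList s B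
  nodup := nodup_signedPairList hB
  same := rfl
  zeroFirst C hC h :=
    absurd h (negSet_ne_self_of_mem_signedPairList hB (List.mem_toFinset.1 hC))
  adjacent C hC _ := by
    obtain ⟨j, b, rfl⟩ := mem_signedPairList.1 (List.mem_toFinset.1 hC)
    refine ⟨2 * j, ?_⟩
    rw [negSet_signedBlock, getElem?_signedPairList_two_mul,
      getElem?_signedPairList_two_mul_add_one]
    cases b <;> simp

end SignedPairList

section SignedPairListProperties

variable {n r : ℕ} {s : Fin n → Bool} {B : Fin r → Finset (Fin n)}

lemma getD_signedPairList (j : Fin r) :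
    (signedPairList s B).getD (2 * j) ∅ = signedBlock s (B j) false := by
  rw [List.getD_eq_getElem?_getD, getElem?_signedPairList_two_mul, Option.getD_some]

lemma sum_card_filter_neg_getD_signedPairList (hB : IsOrderedPartition B) :
    ∑ i ∈ range r, #(((signedPairList s B).getD (2 * i) ∅).filter (· < 0)) =
      #{i | s i = true} := by
  rw [← Fin.sum_univ_eq_sum_range fun i => #(((signedPairList s B).getD (2 * i) ∅).filter (· < 0))]
  simp only [getD_signedPairList]
  exact sum_card_filter_neg_signedBlock hB

lemma eq_of_signedPairList_eq {s' : Fin n → Bool} {B' : Fin r → Finset (Fin n)}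
    (hB : IsOrderedPartition B) (h : signedPairList s B = signedPairList s' B') :
    s = s' ∧ B = B' := by
  have hblock (j : Fin r) : signedBlock s (B j) false = signedBlock s' (B' j) false :=
    Option.some_injective _ <| by
      rw [← getElem?_signedPairList_two_mul, h, getElem?_signedPairList_two_mul]
  obtain rfl : s = s' := funext fun i => by
    obtain ⟨j, hj, -⟩ := hB.2 i
    obtain ⟨i', -, hi'⟩ := mem_signedBlock.1 (hblock j ▸ mem_signedBlock.2 ⟨i, hj, rfl⟩)
    obtain ⟨rfl, hs⟩ := signedVal_inj.1 hi'
    simpa using hs.symm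
  exact ⟨rfl, funext fun j => image_injective (fun _ _ h => (signedVal_inj.1 h).1) (hblock j)⟩

lemma exists_getElem?_signedPairList_zero_iff {k : ℕ} {B : Fin (k + 1) → Finset (Fin n)} :
    (∃ c : ℤ, (signedPairList s B)[0]? = some {c}) ↔ ∃ a, B 0 = {a} := by
  have h0 := getElem?_signedPairList_two_mul (s := s) (B := B) 0
  rw [Fin.val_zero, mul_zero] at h0
  simp only [h0, Option.some.injEq, ← card_eq_one, card_signedBlock]

end SignedPairListProperties

section Reconstruction

variable {n r : ℕ}

lemma exists_signedBlock_eq {C : Fin r → Finset ℤ}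
    (hcover : ∀ x : ℤ, (x ≠ 0 ∧ |x| ≤ n) ↔ ∃ j, x ∈ C j ∨ -x ∈ C j)
    (hne : ∀ j, (C j).Nonempty) (hdisj : ∀ j j' x, x ∈ C j → x ∈ C j' → j = j')
    (hanti : ∀ j j' x, x ∈ C j → -x ∉ C j') :
    ∃ (s : Fin n → Bool) (B : Fin r → Finset (Fin n)),
      IsOrderedPartition B ∧ ∀ j, C j = signedBlock s (B j) false := by
  -- `i + 1` gets the sign of whichever of `±(i+1)` lies in a block; by `hanti` only one does
  let s : Fin n → Bool := fun i => decide (∃ j, signedVal i true ∈ C j)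
  let B : Fin r → Finset (Fin n) := fun j => {i | signedVal i (s i) ∈ C j}
  have hsign {j : Fin r} {x : ℤ} (hx : x ∈ C j) : ∃ i, signedVal i (s i) = x := by
    obtain ⟨i, c, rfl⟩ := exists_signedVal_eq_iff.2 ((hcover x).2 ⟨j, .inl hx⟩)
    refine ⟨i, congrArg _ ?_⟩
    cases c
    · simp only [s, decide_eq_false_iff_not, not_exists]
      intro j' hj'
      exact hanti j j' _ hx (by rwa [neg_signedVal])
    · exact decide_eq_true ⟨j, hx⟩
  have hC (j : Fin r) : C j = signedBlock s (B j) false := by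
    ext x
    simp only [mem_signedBlock, Bool.bne_false, B, mem_filter, mem_univ, true_and]
    refine ⟨fun hx => ?_, fun ⟨i, hi, hix⟩ => hix ▸ hi⟩
    obtain ⟨i, rfl⟩ := hsign hx
    exact ⟨i, hx, rfl⟩
  refine ⟨s, B, ⟨fun j => ?_, fun i => ?_⟩, hC⟩
  · obtain ⟨x, hx⟩ := hne j
    obtain ⟨i, rfl⟩ := hsign hx
    exact ⟨i, by simpa [B] using hx⟩
  · obtain ⟨j, hj⟩ := (hcover (signedVal i false)).1 (exists_signedVal_eq_iff.1 ⟨i, _, rfl⟩)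
    obtain ⟨c, hc⟩ : ∃ c, signedVal i c ∈ C j := by
      rw [neg_signedVal] at hj
      exact hj.elim (⟨_, ·⟩) (⟨_, ·⟩)
    obtain ⟨i', hi'⟩ := hsign hc
    obtain ⟨rfl, -⟩ := signedVal_inj.1 hi'
    refine ⟨j, by simpa [B] using hi' ▸ hc, fun j' hj' => ?_⟩
    exact hdisj _ _ _ (by simpa [B] using hj') (hi' ▸ hc)

end Reconstruction

namespace OrderedBPartition

variable {n : ℕ}

lemma ext_order {Q Q' : OrderedBPartition n} (h : Q.order = Q'.order) : Q = Q' := by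
  obtain ⟨⟨blocks, _⟩, order, _, same, _⟩ := Q
  obtain ⟨⟨blocks', _⟩, order', _, same', _⟩ := Q'
  obtain rfl : order = order' := h
  obtain rfl : blocks = blocks' := same.symm.trans same'
  rfl

lemma mem_blocks_of_getElem? (Q : OrderedBPartition n) {t : ℕ} {X : Finset ℤ}
    (hX : Q.order[t]? = some X) : X ∈ Q.P.blocks := by
  rw [← Q.same, List.mem_toFinset]
  exact List.mem_of_getElem? hX

lemma disjoint_of_getElem? (Q : OrderedBPartition n) {t t' : ℕ} {X Y : Finset ℤ} (htt' : t ≠ t')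
    (hX : Q.order[t]? = some X) (hY : Q.order[t']? = some Y) : Disjoint X Y := by
  refine Q.P.disj X (Q.mem_blocks_of_getElem? hX) Y (Q.mem_blocks_of_getElem? hY) fun hXY => htt' ?_
  obtain ⟨ht, rfl⟩ := List.getElem?_eq_some_iff.1 hX
  obtain ⟨ht', rfl⟩ := List.getElem?_eq_some_iff.1 hY
  exact (Q.nodup.getElem_inj_iff).1 hXY

lemma exists_eq_ofSignedPartition {r : ℕ} (Q : OrderedBPartition n)
    (hlen : Q.order.length = 2 * r)
    (hpair : ∀ i < r, Q.order[2 * i + 1]? = some (negSet (Q.order.getD (2 * i) ∅))) :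
    ∃ (s : Fin n → Bool) (B : Fin r → Finset (Fin n)) (hB : IsOrderedPartition B),
      Q = ofSignedPartition s hB := by
  set C : Fin r → Finset ℤ := fun j => Q.order.getD (2 * j) ∅
  have hL : Q.order = pairList (List.ofFn C) := eq_pairList_ofFn hlen hpair
  have hC (j : Fin r) : Q.order[2 * (j : ℕ)]? = some (C j) := by
    rw [hL, getElem?_pairList_two_mul, List.getElem?_ofFn, dif_pos j.isLt]
  have hnegC (j : Fin r) : Q.order[2 * (j : ℕ) + 1]? = some (negSet (C j)) := hpair j j.isLt
  have hcover (x : ℤ) : (x ≠ 0 ∧ |x| ≤ n) ↔ ∃ j, x ∈ C j ∨ -x ∈ C j := by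
    simp only [Q.P.cover x, ← Q.same, List.mem_toFinset, hL, mem_pairList, List.mem_ofFn,
      ← mem_negSet]
    constructor
    · rintro ⟨_, ⟨_, ⟨j, rfl⟩, rfl | rfl⟩, hx⟩
      exacts [⟨j, .inl hx⟩, ⟨j, .inr hx⟩]
    · rintro ⟨j, hx | hx⟩
      exacts [⟨_, ⟨_, ⟨j, rfl⟩, .inl rfl⟩, hx⟩, ⟨_, ⟨_, ⟨j, rfl⟩, .inr rfl⟩, hx⟩]
  obtain ⟨s, B, hB, hCB⟩ := exists_signedBlock_eq hcover
    (fun j => Q.P.nonempty _ (Q.mem_blocks_of_getElem? (hC j)))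
    (fun j j' x hx hx' => by
      by_contra hjj'
      refine disjoint_left.1 (Q.disjoint_of_getElem? ?_ (hC j) (hC j')) hx hx'
      exact fun h => hjj' (Fin.ext (by omega)))
    (fun j j' x hx hx' => disjoint_left.1
      (Q.disjoint_of_getElem? (by omega) (hC j) (hnegC j')) hx (mem_negSet.2 hx'))
  refine ⟨s, B, hB, ext_order ?_⟩
  rw [hL]
  exact congrArg (fun C => pairList (List.ofFn C)) (funext hCB)

end OrderedBPartition

namespace OrderedBPartition

variable {n : ℕ}

def IsOddSingletonPairing (r : ℕ) (Q : OrderedBPartition n) : Prop :=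
  IsDPartition Q.P ∧
  (∀ C ∈ Q.P.blocks, negSet C ≠ C) ∧
  Q.order.length = 2 * r ∧
  (∀ i < r, Q.order[2 * i + 1]? = some (negSet (Q.order.getD (2 * i) ∅))) ∧
  (∃ a : ℤ, Q.order[0]? = some ({a} : Finset ℤ)) ∧
  Odd (∑ i ∈ Finset.range r, ((Q.order.getD (2 * i) ∅).filter fun x => x < 0).card)

lemma isOddSingletonPairing_ofSignedPartition_iff {k : ℕ} (s : Fin n → Bool)
    {B : Fin (k + 1) → Finset (Fin n)} (hB : IsOrderedPartition B) :
    (ofSignedPartition s hB).IsOddSingletonPairing (k + 1) ↔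
      Odd #{i | s i = true} ∧ ∃ a, B 0 = {a} := by
  have horder : (ofSignedPartition s hB).order = signedPairList s B := rfl
  have hzero (C) (hC : C ∈ (ofSignedPartition s hB).P.blocks) : negSet C ≠ C :=
    negSet_ne_self_of_mem_signedPairList hB (List.mem_toFinset.1 hC)
  have hD : IsDPartition (ofSignedPartition s hB).P := fun C hC h => absurd h (hzero C hC)
  have hpair (i) (hi : i < k + 1) : (signedPairList s B)[2 * i + 1]? =
      some (negSet ((signedPairList s B).getD (2 * i) ∅)) := by
    rw [getD_signedPairList ⟨i, hi⟩, negSet_signedBlock]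
    exact getElem?_signedPairList_two_mul_add_one ⟨i, hi⟩
  have hlen : (signedPairList s B).length = 2 * (k + 1) := by simp [signedPairList]
  rw [IsOddSingletonPairing, horder, exists_getElem?_signedPairList_zero_iff,
    sum_card_filter_neg_getD_signedPairList hB]
  exact ⟨fun h => ⟨h.2.2.2.2.2, h.2.2.2.2.1⟩,
    fun ⟨hodd, hhead⟩ => ⟨hD, hzero, hlen, hpair, hhead, hodd⟩⟩

end OrderedBPartition

open OrderedBPartition in
theorem card_isOddSingletonPairing (n k : ℕ) :
    Nat.card {Q : OrderedBPartition n // Q.IsOddSingletonPairing (k + 1)} =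
      Nat.card {s : Fin n → Bool // Odd #{i | s i = true}} *
        Nat.card {B : Fin (k + 1) → Finset (Fin n) // IsOrderedPartition B ∧ ∃ a, B 0 = {a}} := by
  rw [← Nat.card_prod]
  refine (Nat.card_eq_of_bijective (fun d => ⟨ofSignedPartition d.1.1 d.2.2.1,
    (isOddSingletonPairing_ofSignedPartition_iff _ _).2 ⟨d.1.2, d.2.2.2⟩⟩) ⟨?_, ?_⟩).symm
  · intro ⟨⟨s, _⟩, ⟨B, hB, _⟩⟩ ⟨⟨s', _⟩, ⟨B', _⟩⟩ hQ
    obtain ⟨rfl, rfl⟩ := eq_of_signedPairList_eq hB (congrArg (fun Q => Q.1.order) hQ)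
    rfl
  · rintro ⟨Q, hQ⟩
    obtain ⟨s, B, hB, rfl⟩ := Q.exists_eq_ofSignedPartition hQ.2.2.1 hQ.2.2.2.1
    obtain ⟨hodd, hhead⟩ := (isOddSingletonPairing_ofSignedPartition_iff s hB).1 hQ
    exact ⟨⟨⟨s, hodd⟩, ⟨B, hB, hhead⟩⟩, rfl⟩

theorem count_unreachable_ordered_D_partitions_general (n r : ℕ) (hn : 2 ≤ n) (hr1 : 1 ≤ r) :
    Nat.card { Q : OrderedBPartition n //
      IsDPartition Q.P ∧
      (∀ C ∈ Q.P.blocks, negSet C ≠ C) ∧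
      Q.order.length = 2 * r ∧
      (∀ i < r, Q.order[2 * i + 1]? = some (negSet (Q.order.getD (2 * i) ∅))) ∧
      (∃ a : ℤ, Q.order[0]? = some ({a} : Finset ℤ)) ∧
      Odd (∑ i ∈ Finset.range r, ((Q.order.getD (2 * i) ∅).filter fun x => x < 0).card) } =
    n * 2 ^ (n - 1) * Nat.factorial (r - 1) * Stir (n - 1) (r - 1) := by
  obtain ⟨k, rfl⟩ : ∃ k, r = k + 1 := ⟨r - 1, by omega⟩
  have : Nonempty (Fin n) := ⟨⟨0, by omega⟩⟩
  refine (card_isOddSingletonPairing n k).trans ?_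
  rw [card_odd_signs, card_orderedPartition_singleton_head, Fintype.card_fin, Nat.add_sub_cancel]
  ring

/-- The number of ordered `Dₙ`-partitions of the form `[C₁, −C₁, …, C_r, −C_r]` (no zero-block,
`r` pairs of nonzero blocks), with `C₁` a singleton, and an odd total number of negative
elements in `C₁ ∪ ⋯ ∪ C_r`, equals `n · 2^{n−1} · (r−1)! · S(n−1, r−1)`. -/
theorem count_unreachable_ordered_D_partitions (n r : ℕ) (hn : 2 ≤ n) (hr1 : 1 ≤ r)
    (hrn : r ≤ n) :
    Nat.card { Q : OrderedBPartition n //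
      IsDPartition Q.P ∧
      (∀ C ∈ Q.P.blocks, negSet C ≠ C) ∧
      Q.order.length = 2 * r ∧
      (∀ i < r, Q.order[2 * i + 1]? = some (negSet (Q.order.getD (2 * i) ∅))) ∧
      (∃ a : ℤ, Q.order[0]? = some ({a} : Finset ℤ)) ∧
      Odd (∑ i ∈ Finset.range r, ((Q.order.getD (2 * i) ∅).filter fun x => x < 0).card) } =
    n * 2 ^ (n - 1) * Nat.factorial (r - 1) * Stir (n - 1) (r - 1) :=
  count_unreachable_ordered_D_partitions_general n r hn hr1
end

section
/- For all integers n ≥ 1 and m ≥ 0, the number of vectors v = (v_1,…,v_n) ∈ ℤ^n such that |v_i| ≤ m for all i, and v_i ≠ v_j and v_i ≠ −v_j for all i ≠ j, equals (2m + 2 − n) · ∏_{k=1}^{n−1} (2m + 2 − 2k) (the number of integer lattice points of the cube {−m,…,m}^n lying on none of the hyperplanes of the type-D Coxeter arrangement x_i = ±x_j). -/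
open Classical Finset

/-! A point of `{-m,…,m}^n` off the type-`D` arrangement has pairwise distinct absolute values, so
at most one of its coordinates vanishes. If none does, it is a point off the type-`B` arrangement:
its absolute values form an injection into `{1,…,m}` and its signs are free, which gives
`2^n · m(m-1)⋯(m-n+1)` points. If the coordinate `i` vanishes, the other coordinates form such a
point in dimension `n - 1`. Adding up, the count is `2^(n-1) · m⋯(m-n+2) · (2(m-n+1) + n)`, and the
product `∏_{k=1}^{n-1} (2m + 2 - 2k)` is exactly `2^(n-1) · m⋯(m-n+2)`. -/

open Function

def signedSucc (b : Bool) (k : ℕ) : ℤ := if b then k + 1 else -(k + 1)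

@[simp] theorem natAbs_signedSucc (b : Bool) (k : ℕ) : (signedSucc b k).natAbs = k + 1 := by
  unfold signedSucc; split <;> omega

@[simp] theorem decide_pos_signedSucc (b : Bool) (k : ℕ) : decide (0 < signedSucc b k) = b := by
  cases b <;> simp [signedSucc]

theorem signedSucc_ne_zero (b : Bool) (k : ℕ) : signedSucc b k ≠ 0 := by
  simp [← Int.natAbs_ne_zero]

theorem signedSucc_decide_pos_natAbs_sub_one {x : ℤ} (hx : x ≠ 0) :
    signedSucc (decide (0 < x)) (x.natAbs - 1) = x := by
  unfold signedSucc
  split_ifs with h <;> rw [decide_eq_true_eq] at h <;> omega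

section CubeOffArrangement

variable (ι : Type*) (m : ℕ)

/-- Points of the cube `{-m,…,m}^ι` on no hyperplane `x_i = ±x_j`: these hyperplanes are avoided
exactly when the absolute values are pairwise distinct. -/
def cubeOffTypeD : Set (ι → ℤ) :=
  {v | (∀ i, (v i).natAbs ≤ m) ∧ Injective fun i => (v i).natAbs}

def cubeOffTypeB : Set (ι → ℤ) :=
  {v | v ∈ cubeOffTypeD ι m ∧ ∀ i, v i ≠ 0}

theorem mem_cubeOffTypeD_iff {v : ι → ℤ} : v ∈ cubeOffTypeD ι m ↔
    (∀ i, |v i| ≤ (m : ℤ)) ∧ ∀ i j, i ≠ j → v i ≠ v j ∧ v i ≠ -v j := by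
  refine and_congr (forall_congr' fun i => ?_) ?_
  · rw [Int.abs_eq_natAbs, Nat.cast_le]
  · simp only [Injective, Int.natAbs_eq_natAbs_iff, ne_eq, ← not_or]
    exact forall₂_congr fun _ _ => not_imp_not.symm

def cubeOffTypeBEquiv : cubeOffTypeB ι m ≃ (ι → Bool) × (ι ↪ Fin m) where
  toFun v := (fun i => decide (0 < v.1 i),
    ⟨fun i => ⟨(v.1 i).natAbs - 1, by have := v.2.1.1 i; have := v.2.2 i; omega⟩,
      fun i j hij => v.2.1.2 <| show (v.1 i).natAbs = (v.1 j).natAbs by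
        have := v.2.2 i; have := v.2.2 j; simp only [Fin.mk.injEq] at hij; omega⟩)
  invFun p := ⟨fun i => signedSucc (p.1 i) (p.2 i),
    ⟨fun i => by simp, fun i j hij => p.2.injective (Fin.ext (by simpa using hij))⟩,
    fun i => signedSucc_ne_zero _ _⟩
  left_inv v := by ext i; exact signedSucc_decide_pos_natAbs_sub_one (v.2.2 i)
  right_inv p := by ext i <;> simp

theorem card_cubeOffTypeB [Fintype ι] :
    Nat.card (cubeOffTypeB ι m) = 2 ^ Fintype.card ι * m.descFactorial (Fintype.card ι) := by
  rw [Nat.card_congr (cubeOffTypeBEquiv ι m), Nat.card_prod, Nat.card_fun,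
    Nat.card_eq_fintype_card (α := ι ↪ Fin m), Fintype.card_embedding_eq]
  simp

instance [Finite ι] : Finite (cubeOffTypeB ι m) := .of_equiv _ (cubeOffTypeBEquiv ι m).symm

variable {ι}

def cubeOffTypeDZeroAt (i : ι) : Set (ι → ℤ) := {v | v ∈ cubeOffTypeD ι m ∧ v i = 0}

variable {m}

theorem ne_zero_of_mem_cubeOffTypeDZeroAt {i j : ι} {v : ι → ℤ}
    (hv : v ∈ cubeOffTypeDZeroAt m i) (hj : j ≠ i) : v j ≠ 0 :=
  fun h => hj <| hv.1.2 <| by simp [h, hv.2]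

variable (m) [DecidableEq ι]

def cubeOffTypeDZeroAtEquiv (i : ι) : cubeOffTypeDZeroAt m i ≃ cubeOffTypeB {j // j ≠ i} m where
  toFun v := ⟨fun j => v.1 j, ⟨fun j => v.2.1.1 j, fun _ _ h => Subtype.ext (v.2.1.2 h)⟩,
    fun j => ne_zero_of_mem_cubeOffTypeDZeroAt v.2 j.2⟩
  invFun w := ⟨fun j => if h : j = i then 0 else w.1 ⟨j, h⟩, by
    refine ⟨⟨fun j => ?_, fun j k hjk => ?_⟩, by simp⟩
    · dsimp only
      split
      · simp
      · exact w.2.1.1 _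
    · have hw := w.2.2
      dsimp only at hjk
      split at hjk <;> split at hjk
      · simp_all
      · exact absurd hjk.symm (by simpa using hw ⟨k, by assumption⟩)
      · exact absurd hjk (by simpa using hw ⟨j, by assumption⟩)
      · exact congrArg Subtype.val (w.2.1.2 hjk)⟩
  left_inv v := by
    ext j
    dsimp only
    split
    · subst j; exact v.2.2.symm
    · rfl
  right_inv w := by ext j; simp [j.2]

instance [Finite ι] (i : ι) : Finite (cubeOffTypeDZeroAt m i) :=
  .of_equiv _ (cubeOffTypeDZeroAtEquiv m i).symm

theorem card_cubeOffTypeD [Fintype ι] :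
    Nat.card (cubeOffTypeD ι m) = 2 ^ Fintype.card ι * m.descFactorial (Fintype.card ι) +
      Fintype.card ι * (2 ^ (Fintype.card ι - 1) * m.descFactorial (Fintype.card ι - 1)) := by
  have hunion : cubeOffTypeD ι m = cubeOffTypeB ι m ∪ ⋃ i, cubeOffTypeDZeroAt m i := by
    ext v
    simp only [cubeOffTypeB, cubeOffTypeDZeroAt, Set.mem_union, Set.mem_iUnion, Set.mem_ofPred_eq]
    constructor
    · intro hv
      by_cases h : ∃ i, v i = 0
      · obtain ⟨i, hi⟩ := h
        exact Or.inr ⟨i, hv, hi⟩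
      · exact Or.inl ⟨hv, not_exists.mp h⟩
    · rintro (⟨hv, -⟩ | ⟨-, hv, -⟩) <;> exact hv
  have hdisj : Disjoint (cubeOffTypeB ι m) (⋃ i, cubeOffTypeDZeroAt m i) := by
    simp only [Set.disjoint_iUnion_right]
    exact fun i => Set.disjoint_left.2 fun v hB hZ => hB.2 i hZ.2
  have hpair : Pairwise (Disjoint on (cubeOffTypeDZeroAt m : ι → Set (ι → ℤ))) := fun i j hij =>
    Set.disjoint_left.2 fun v hi hj => ne_zero_of_mem_cubeOffTypeDZeroAt hi hij.symm hj.2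
  rw [hunion, Nat.card_congr (Equiv.Set.union hdisj), Nat.card_sum,
    Nat.card_congr (Set.unionEqSigmaOfDisjoint hpair), Nat.card_sigma]
  simp only [Nat.card_congr (cubeOffTypeDZeroAtEquiv m _), card_cubeOffTypeB,
    Fintype.card_subtype_compl, Fintype.card_unique, Finset.sum_const, Finset.card_univ,
    smul_eq_mul]

end CubeOffArrangement

theorem cast_descFactorial_succ {R : Type*} [CommRing R] (m n : ℕ) :
    (m.descFactorial (n + 1) : R) = (m - n) * m.descFactorial n := by
  rw [← descPochhammer_eval_eq_descFactorial, descPochhammer_succ_eval,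
    descPochhammer_eval_eq_descFactorial, mul_comm]

theorem prod_Icc_two_mul_add_two_sub (m n : ℕ) :
    ∏ k ∈ Finset.Icc 1 n, (2 * (m : ℤ) + 2 - 2 * k) = 2 ^ n * m.descFactorial n := by
  induction n with
  | zero => simp
  | succ n ih =>
    rw [Finset.prod_Icc_succ_top (by omega), ih, cast_descFactorial_succ]
    push_cast
    ring

/-- The number of lattice points of `{−m,…,m}^n` on none of the hyperplanes of the
type `D` Coxeter arrangement equals `(2m + 2 − n) · ∏_{k=1}^{n−1} (2m + 2 − 2k)`. -/
theorem lattice_points_typeD (n m : ℕ) (hn : 1 ≤ n) :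
    (Nat.card { v : Fin n → ℤ //
        (∀ i, |v i| ≤ (m : ℤ)) ∧
        ∀ i j, i ≠ j → v i ≠ v j ∧ v i ≠ -v j } : ℤ) =
      (2 * (m : ℤ) + 2 - (n : ℤ)) *
        ∏ k ∈ Finset.Icc 1 (n - 1), (2 * (m : ℤ) + 2 - 2 * (k : ℤ)) := by
  obtain ⟨n, rfl⟩ : ∃ k, n = k + 1 := ⟨n - 1, by omega⟩
  rw [← Nat.card_congr (Equiv.subtypeEquivRight fun v => mem_cubeOffTypeD_iff (Fin (n + 1)) m),
    card_cubeOffTypeD, Fintype.card_fin, Nat.add_sub_cancel,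
    prod_Icc_two_mul_add_two_sub]
  push_cast [cast_descFactorial_succ]
  ring
end

section
/- For all integers n ≥ 1 and 0 ≤ r ≤ n, one has r! · S(n,r) = Σ_{k=0}^{r} A(n,k) · C(n−k, r−k), where C(a,b) denotes the binomial coefficient. -/
open Classical Finset

/-! Both sides count the surjections `f : Fin n → Fin r`.

Grouped by their kernel partition: a partition of `Fin n` into `r` blocks is the kernel of
exactly `r!` surjections, which gives `r! · S(n,r)`.

Grouped by the stable sorting permutation `σ` of `f`: then `g = f ∘ σ` is a monotone surjection
that strictly increases at every descent of `σ`, and `f ↦ g` is a bijection onto such `g`.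
A monotone surjection `Fin n → Fin r` is determined by its set of `r - 1` ascents among the
`n - 1` gaps, and this set has to contain the `des σ` descents of `σ`, leaving
`C(n - 1 - des σ, r - 1 - des σ)` choices. With `k = des σ + 1` this is the right-hand side. -/

open Function

lemma Nat.card_eq_sum_card_fiber {α β : Type*} [Finite α] [Fintype β] {p : α → Prop}
    (g : α → β) : Nat.card {a // p a} = ∑ b, Nat.card {a // p a ∧ g a = b} := by
  rw [← Nat.card_congr (Equiv.sigmaFiberEquiv (g ∘ Subtype.val)), Nat.card_sigma]
  exact sum_congr rfl fun b _ =>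
    Nat.card_congr (Equiv.subtypeSubtypeEquivSubtypeInter p (g · = b))

lemma card_supersets_of_card {ι : Type*} [Fintype ι] (D : Finset ι) (k : ℕ) :
    Nat.card {J : Finset ι // #J = k ∧ D ⊆ J} =
      if #D ≤ k then (Fintype.card ι - #D).choose (k - #D) else 0 := by
  rw [Nat.card_eq_fintype_card, Fintype.card_subtype]
  split_ifs with hD
  · rw [← card_compl, ← card_powersetCard]
    have hdisj {u : Finset ι} (hu : u ⊆ Dᶜ) : Disjoint D u :=
      disjoint_left.2 fun x hx hx' => mem_compl.1 (hu hx') hx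
    refine card_bij' (fun J _ => J \ D) (fun u _ => D ∪ u) (fun J hJ => ?_) (fun u hu => ?_)
      (fun J hJ => ?_) (fun u hu => ?_)
    · obtain ⟨-, hJk, hDJ⟩ := mem_filter.1 hJ
      rw [mem_powersetCard, card_sdiff_of_subset hDJ, hJk]
      exact ⟨fun x hx => mem_compl.2 (mem_sdiff.1 hx).2, rfl⟩
    · rw [mem_powersetCard] at hu
      refine mem_filter.2 ⟨mem_univ _, ?_, subset_union_left⟩
      rw [card_union_of_disjoint (hdisj hu.1), hu.2]
      omega
    · exact union_sdiff_of_subset (mem_filter.1 hJ).2.2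
    · exact union_sdiff_cancel_left (hdisj (mem_powersetCard.1 hu).1)
  · exact card_eq_zero.2 <| filter_eq_empty_iff.2 fun J _ ⟨hJk, hDJ⟩ =>
      hD (hJk ▸ card_le_card hDJ)

lemma Fin.exists_apply_eq_of_le_apply_last {m : ℕ} (h : Fin (m + 1) → ℕ) (h0 : h 0 = 0)
    (hstep : ∀ i : Fin m, h i.succ ≤ h i.castSucc + 1) {v : ℕ} (hv : v ≤ h (Fin.last m)) :
    ∃ i, h i = v := by
  suffices ∀ i, ∀ v ≤ h i, ∃ j, h j = v from this _ v hv
  refine Fin.induction (fun v hv => ⟨0, by omega⟩) fun i ih v hv => ?_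
  by_cases hvi : v ≤ h i.castSucc
  · exact ih v hvi
  · exact ⟨i.succ, by have := hstep i; omega⟩

section KernelPartition

variable {α β γ : Type*}

noncomputable def equivOfSameFibers (π : α → γ) (hπ : Surjective π) :
    {f : α → β // Surjective f ∧ ∀ a b, f a = f b ↔ π a = π b} ≃ (γ ≃ β) where
  toFun f := Equiv.ofBijective (f.1 ∘ surjInv hπ)
    ⟨fun c c' h => by
      simpa only [surjInv_eq] using (f.2.2 (surjInv hπ c) (surjInv hπ c')).1 h,
     fun b => by
      obtain ⟨a, rfl⟩ := f.2.1 b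
      exact ⟨π a, (f.2.2 _ _).2 (surjInv_eq hπ _)⟩⟩
  invFun e := ⟨e ∘ π, e.surjective.comp hπ, fun _ _ => e.injective.eq_iff⟩
  left_inv f := Subtype.ext <| funext fun a => (f.2.2 _ _).2 (surjInv_eq hπ (π a))
  right_inv e := Equiv.ext fun c => congrArg e (surjInv_eq hπ c)

variable [Fintype α] [DecidableEq α]

noncomputable def Finpartition.partOf (P : Finpartition (univ : Finset α)) (a : α) : P.parts :=
  ⟨P.part a, P.part_mem.2 (mem_univ a)⟩

lemma Finpartition.partOf_surjective (P : Finpartition (univ : Finset α)) :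
    Surjective P.partOf := fun C => by
  obtain ⟨a, ha⟩ := P.nonempty_of_mem_parts C.2
  exact ⟨a, Subtype.ext (P.part_eq_of_mem C.2 ha)⟩

lemma Finpartition.partOf_eq_partOf_iff (P : Finpartition (univ : Finset α)) {a b : α} :
    P.partOf a = P.partOf b ↔ b ∈ P.part a := by
  rw [Subtype.ext_iff, P.mem_part_iff_part_eq_part (mem_univ b) (mem_univ a), eq_comm]
  rfl

noncomputable def kerPartition (f : α → β) : Finpartition (univ : Finset α) :=
  Finpartition.ofSetoid (Setoid.ker f)

lemma kerPartition_eq_iff {f : α → β} {P : Finpartition (univ : Finset α)} :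
    kerPartition f = P ↔ ∀ a b, f a = f b ↔ P.partOf a = P.partOf b := by
  have hker : ∀ a b, b ∈ (kerPartition f).part a ↔ f a = f b := fun _ _ =>
    Finpartition.mem_part_ofSetoid_iff_rel
  refine ⟨fun h a b => ?_, fun h => ?_⟩
  · rw [← h, Finpartition.partOf_eq_partOf_iff, hker]
  · have hpart : ∀ a, (kerPartition f).part a = P.part a := fun a => by
      ext b
      rw [hker, h, Finpartition.partOf_eq_partOf_iff]
    ext C
    constructor <;> intro hC
    · obtain ⟨a, ha⟩ := (kerPartition f).nonempty_of_mem_parts hC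
      rw [← (kerPartition f).part_eq_of_mem hC ha, hpart]
      exact P.part_mem.2 (mem_univ a)
    · obtain ⟨a, ha⟩ := P.nonempty_of_mem_parts hC
      rw [← P.part_eq_of_mem hC ha, ← hpart]
      exact (kerPartition f).part_mem.2 (mem_univ a)

variable [Fintype β]

lemma card_parts_kerPartition {f : α → β} (hf : Surjective f) :
    #(kerPartition f).parts = Fintype.card β := by
  let P := kerPartition f
  have e := equivOfSameFibers P.partOf P.partOf_surjective ⟨f, hf, kerPartition_eq_iff.1 rfl⟩
  rw [← Fintype.card_coe, Fintype.card_congr e]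

lemma card_surjective_kerPartition_eq (P : Finpartition (univ : Finset α)) :
    Nat.card {f : α → β // Surjective f ∧ kerPartition f = P} =
      if #P.parts = Fintype.card β then (Fintype.card β).factorial else 0 := by
  split_ifs with hP
  · rw [← Fintype.card_coe] at hP
    rw [← hP, ← Fintype.card_equiv (Fintype.equivOfCardEq hP), ← Nat.card_eq_fintype_card]
    exact Nat.card_congr <|
      (Equiv.subtypeEquivRight fun f => and_congr_right fun _ => kerPartition_eq_iff).trans <|
      equivOfSameFibers P.partOf P.partOf_surjective
  · exact Nat.card_eq_zero.2 <| Or.inl ⟨fun f => hP (f.2.2 ▸ card_parts_kerPartition f.2.1)⟩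

theorem card_surjective_eq_factorial_mul_card_finpartition :
    Nat.card {f : α → β // Surjective f} =
      (Fintype.card β).factorial *
        Nat.card {P : Finpartition (univ : Finset α) // #P.parts = Fintype.card β} := by
  rw [Nat.card_eq_sum_card_fiber kerPartition,
    sum_congr rfl fun P _ => card_surjective_kerPartition_eq P, ← sum_filter, sum_const,
    smul_eq_mul, mul_comm, Nat.card_eq_fintype_card, Fintype.card_subtype]

end KernelPartition

section AscentsDescents

variable {m : ℕ} {α : Type*} [LinearOrder α]

def ascentSet (v : Fin (m + 1) → α) : Finset (Fin m) :=
  {i | v i.castSucc < v i.succ}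

def descentSet (v : Fin (m + 1) → α) : Finset (Fin m) :=
  {i | v i.succ < v i.castSucc}

lemma strictMono_toLex_iff {β : Type*} [LinearOrder β] (g : Fin (m + 1) → α)
    {v : Fin (m + 1) → β} (hv : Injective v) :
    StrictMono (fun i => toLex (g i, v i)) ↔ Monotone g ∧ descentSet v ⊆ ascentSet g := by
  simp only [Fin.strictMono_iff_lt_succ, Fin.monotone_iff_le_succ, Prod.Lex.toLex_lt_toLex,
    subset_iff, ascentSet, descentSet, mem_filter, mem_univ, true_and, ← forall_and]
  refine forall_congr' fun i => ⟨?_, fun ⟨hle, hdes⟩ => ?_⟩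
  · rintro (hlt | ⟨heq, hv'⟩)
    · exact ⟨hlt.le, fun _ => hlt⟩
    · exact ⟨heq.le, fun hv'' => absurd hv' hv''.asymm⟩
  · rcases hle.lt_or_eq with hlt | heq
    · exact Or.inl hlt
    · refine Or.inr ⟨heq, (hv.ne (Fin.castSucc_lt_succ (i := i)).ne).lt_of_le ?_⟩
      exact not_lt.1 fun hv' => (hdes hv').ne heq

end AscentsDescents

noncomputable def sortFiberEquiv {n : ℕ} {α : Type*} [LinearOrder α] (σ : Equiv.Perm (Fin n)) :
    {f : Fin n → α // Surjective f ∧ Tuple.sort f = σ} ≃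
      {g : Fin n → α // Surjective g ∧ StrictMono fun i => toLex (g i, σ i)} :=
  (σ.symm.arrowCongr (Equiv.refl α)).subtypeEquiv fun f =>
    and_congr (EquivLike.surjective_comp σ f).symm (eq_comm.trans Tuple.eq_sort_iff')

section StepFunction

variable {m k : ℕ}

lemma card_filter_castSucc_lt_succ (J : Finset (Fin m)) (i : Fin m) :
    #{j ∈ J | j.castSucc < i.succ} =
      #{j ∈ J | j.castSucc < i.castSucc} + if i ∈ J then 1 else 0 := by
  have hsplit : {j ∈ J | j.castSucc < i.succ} =
      {j ∈ J | j.castSucc < i.castSucc} ∪ {j ∈ J | j = i} := by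
    ext j
    simp only [mem_filter, mem_union, Fin.castSucc_lt_succ_iff, Fin.castSucc_lt_castSucc_iff,
      le_iff_lt_or_eq, and_or_left]
  rw [hsplit, card_union_of_disjoint (disjoint_filter.2 fun _ _ hlt heq =>
    (Fin.castSucc_lt_castSucc_iff.1 hlt).ne heq), filter_eq']
  split_ifs <;> simp

def stepFunction (J : Finset (Fin m)) (hJ : #J ≤ k) (i : Fin (m + 1)) : Fin (k + 1) :=
  ⟨#{j ∈ J | j.castSucc < i}, Nat.lt_succ_of_le ((card_filter_le _ _).trans hJ)⟩

variable {J : Finset (Fin m)} (hJ : #J ≤ k)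

lemma stepFunction_zero : stepFunction J hJ 0 = 0 := by
  simp [stepFunction]

lemma val_stepFunction_succ (i : Fin m) :
    (stepFunction J hJ i.succ : ℕ) = stepFunction J hJ i.castSucc + if i ∈ J then 1 else 0 :=
  card_filter_castSucc_lt_succ J i

lemma val_stepFunction_last : (stepFunction J hJ (Fin.last m) : ℕ) = #J := by
  simp [stepFunction, Fin.castSucc_lt_last]

lemma monotone_stepFunction : Monotone (stepFunction J hJ) :=
  Fin.monotone_iff_le_succ.2 fun i => by
    rw [Fin.le_def, val_stepFunction_succ]
    exact Nat.le_add_right _ _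

lemma ascentSet_stepFunction : ascentSet (stepFunction J hJ) = J := by
  ext i
  simp only [ascentSet, mem_filter, mem_univ, true_and, Fin.lt_def, val_stepFunction_succ]
  split_ifs with h <;> simp [h]

lemma surjective_stepFunction (hJk : #J = k) : Surjective (stepFunction J hJk.le) := fun v => by
  obtain ⟨i, hi⟩ :=
    Fin.exists_apply_eq_of_le_apply_last (fun i => (stepFunction J hJk.le i : ℕ))
    (by simp [stepFunction_zero]) (fun i => by rw [val_stepFunction_succ]; split_ifs <;> simp)
    (v := v) (by rw [val_stepFunction_last, hJk]; exact Nat.lt_succ_iff.1 v.2)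
  exact ⟨i, Fin.ext hi⟩

end StepFunction

section MonotoneSurjective

variable {m k : ℕ} {g : Fin (m + 1) → Fin (k + 1)}

lemma apply_zero_of_monotone_of_surjective (hg : Monotone g) (hs : Surjective g) : g 0 = 0 := by
  obtain ⟨a, ha⟩ := hs 0
  exact le_antisymm (ha ▸ hg (Fin.zero_le a)) (Fin.zero_le _)

lemma apply_last_of_monotone_of_surjective (hg : Monotone g) (hs : Surjective g) :
    g (Fin.last m) = Fin.last k := by
  obtain ⟨a, ha⟩ := hs (Fin.last k)
  exact le_antisymm (Fin.le_last _) (ha ▸ hg (Fin.le_last a))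

lemma val_apply_succ_le_of_monotone_of_surjective (hg : Monotone g) (hs : Surjective g)
    (i : Fin m) : (g i.succ : ℕ) ≤ g i.castSucc + 1 := by
  by_contra! hlt
  obtain ⟨a, ha⟩ := hs ⟨g i.castSucc + 1, by omega⟩
  rcases le_or_gt a i.castSucc with hai | hia
  · have := Fin.le_def.1 (hg hai)
    rw [ha] at this
    simp at this
  · have := Fin.le_def.1 (hg (Fin.castSucc_lt_iff_succ_le.1 hia))
    rw [ha] at this
    simp at this
    omega

lemma val_eq_card_ascentSet_filter (hg : Monotone g) (hs : Surjective g) (i : Fin (m + 1)) :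
    (g i : ℕ) = #{j ∈ ascentSet g | j.castSucc < i} := by
  induction i using Fin.induction with
  | zero => simp [apply_zero_of_monotone_of_surjective hg hs]
  | succ i ih =>
    rw [card_filter_castSucc_lt_succ, ← ih]
    have hle := val_apply_succ_le_of_monotone_of_surjective hg hs i
    have hmono := Fin.le_def.1 (hg (Fin.castSucc_lt_succ (i := i)).le)
    simp only [ascentSet, mem_filter, mem_univ, true_and, Fin.lt_def]
    split_ifs <;> omega

lemma card_ascentSet_of_monotone_of_surjective (hg : Monotone g) (hs : Surjective g) :
    #(ascentSet g) = k := by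
  have := val_eq_card_ascentSet_filter hg hs (Fin.last m)
  rw [apply_last_of_monotone_of_surjective hg hs,
    filter_true_of_mem fun j _ => Fin.castSucc_lt_last j] at this
  simpa using this.symm

end MonotoneSurjective

noncomputable def monotoneSurjectiveEquiv (m k : ℕ) :
    {g : Fin (m + 1) → Fin (k + 1) // Monotone g ∧ Surjective g} ≃
      {J : Finset (Fin m) // #J = k} where
  toFun g := ⟨ascentSet g.1, card_ascentSet_of_monotone_of_surjective g.2.1 g.2.2⟩
  invFun J :=
    ⟨stepFunction J.1 J.2.le, monotone_stepFunction J.2.le, surjective_stepFunction J.2⟩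
  left_inv g := Subtype.ext <| funext fun i =>
    Fin.ext (val_eq_card_ascentSet_filter g.2.1 g.2.2 i).symm
  right_inv J := Subtype.ext (ascentSet_stepFunction J.2.le)

lemma card_surjective_sort_eq {m : ℕ} (r : ℕ) (σ : Equiv.Perm (Fin (m + 1))) :
    Nat.card {f : Fin (m + 1) → Fin r // Surjective f ∧ Tuple.sort f = σ} =
      if #(descentSet σ) + 1 ≤ r then (m - #(descentSet σ)).choose (r - (#(descentSet σ) + 1))
      else 0 := by
  rw [Nat.card_congr ((sortFiberEquiv σ).trans (Equiv.subtypeEquivRight fun g =>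
    and_congr_right fun _ => strictMono_toLex_iff g σ.injective))]
  cases r with
  | zero => simp
  | succ k =>
    have e : {g : Fin (m + 1) → Fin (k + 1) //
          Surjective g ∧ Monotone g ∧ descentSet σ ⊆ ascentSet g} ≃
        {J : Finset (Fin m) // #J = k ∧ descentSet σ ⊆ J} :=
      (Equiv.subtypeEquivRight fun g => by tauto).trans <|
        (Equiv.subtypeSubtypeEquivSubtypeInter _ (descentSet σ ⊆ ascentSet ·)).symm.trans <|
        ((monotoneSurjectiveEquiv m k).subtypeEquiv fun g => Iff.rfl).trans <|
        Equiv.subtypeSubtypeEquivSubtypeInter _ (descentSet σ ⊆ ·)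
    rw [Nat.card_congr e, card_supersets_of_card, Fintype.card_fin]
    simp only [Nat.add_le_add_iff_right, Nat.add_sub_add_right]

lemma desA_eq_card_descentSet {m : ℕ} (σ : Equiv.Perm (Fin (m + 1))) :
    desA σ = #(descentSet σ) := by
  symm
  refine card_bij (fun i _ => (i : ℕ)) (fun i hi => ?_) (fun _ _ _ _ h => Fin.val_injective h)
    (fun i hi => ?_)
  · simp only [descentSet, mem_filter, mem_univ, true_and] at hi
    simp only [mem_filter, mem_range]
    exact ⟨by omega, by omega, hi⟩
  · obtain ⟨-, h, hlt⟩ := mem_filter.1 hi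
    exact ⟨⟨i, by omega⟩, by simpa [descentSet] using hlt, rfl⟩

theorem card_surjective_eq_sum_perm (m r : ℕ) :
    Nat.card {f : Fin (m + 1) → Fin r // Surjective f} =
      ∑ σ : Equiv.Perm (Fin (m + 1)),
        if desA σ + 1 ≤ r then (m - desA σ).choose (r - (desA σ + 1)) else 0 := by
  rw [Nat.card_eq_sum_card_fiber Tuple.sort]
  simp only [card_surjective_sort_eq, desA_eq_card_descentSet]

lemma eulA_eq_card (n k : ℕ) :
    EulA n k = #{σ : Equiv.Perm (Fin n) | desA σ + 1 = k} := by
  rw [EulA]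
  split_ifs with hk
  · simp [hk]
  · rw [Nat.card_eq_fintype_card, Fintype.card_subtype]
    congr 1
    ext σ
    simp only [mem_filter, mem_univ, true_and]
    omega

lemma sum_eulA_mul_choose (m r : ℕ) :
    ∑ k ∈ range (r + 1), EulA (m + 1) k * (m + 1 - k).choose (r - k) =
      ∑ σ : Equiv.Perm (Fin (m + 1)),
        if desA σ + 1 ≤ r then (m - desA σ).choose (r - (desA σ + 1)) else 0 := by
  simp only [eulA_eq_card, card_eq_sum_ones, sum_mul, one_mul]
  rw [sum_fiberwise_eq_sum_filter' (g := fun σ => desA σ + 1)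
    (f := fun k => (m + 1 - k).choose (r - k)), sum_filter]
  simp

theorem stirling_eulerian_typeA_general (n r : ℕ) (hn : 1 ≤ n) :
    Nat.factorial r * Stir n r =
      ∑ k ∈ Finset.range (r + 1), EulA n k * Nat.choose (n - k) (r - k) := by
  obtain ⟨m, rfl⟩ : ∃ m, n = m + 1 := ⟨n - 1, by omega⟩
  have h := card_surjective_eq_factorial_mul_card_finpartition (α := Fin (m + 1)) (β := Fin r)
  rw [Fintype.card_fin, card_surjective_eq_sum_perm] at h
  rw [sum_eulA_mul_choose, h, Stir]

/-- `r! · S(n,r) = Σ_{k=0}^{r} A(n,k) · C(n−k, r−k)`. -/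
theorem stirling_eulerian_typeA (n r : ℕ) (hn : 1 ≤ n) (hr : r ≤ n) :
    Nat.factorial r * Stir n r =
      ∑ k ∈ Finset.range (r + 1), EulA n k * Nat.choose (n - k) (r - k) :=
  stirling_eulerian_typeA_general n r hn
end
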